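/- Let X ∈ ℂ, α ∈ ℝ, t ∈ ℝ, and let f_t : ℂ → ℂ be defined by f_t p = (1 − t) * p + t * (X + Complex.exp (α * Complex.I) * (p − X)). Then for all a, b, c ∈ ℂ, the signed area determinant scales by the nonnegative factor |c_t|²: Complex.im (conj (f_t b − f_t a) * (f_t c − f_t a)) = (Complex.abs ((1 − t) + t * Complex.exp (α * Complex.I)))^2 * Complex.im (conj (b − a) * (c − a)). Consequently, if additionally ¬(Complex.exp (α * Complex.I) = −1 ∧ t = 1/2), every positively oriented triangle remains positively oriented throughout the linear morph from a polygon to its rotation. (Orientation-preservation underlying Lemma 3.3 and Lemma 3.5 of the paper.) -/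

import Mathlib

/-!
The time-`t` map is `p ↦ c p + const` with `c = (1 - t) + t e^{iα}`, so it multiplies differences
by `c` and the signed area `Im (conj u * v)` by `|c|²`. Since `|e^{iα}| = 1`, `c = 0` forces
`|t| = |1 - t|`, i.e. `t = 1/2`, and then `e^{iα} = -1`.
-/

open ComplexConjugate

lemma Complex.im_conj_mul_mul_conj_mul (c z w : ℂ) :
    (conj (c * z) * (c * w)).im = ‖c‖ ^ 2 * (conj z * w).im := by
  have h : conj (c * z) * (c * w) = (‖c‖ ^ 2 : ℝ) * (conj z * w) := by
    rw [map_mul, Complex.ofReal_pow, ← Complex.conj_mul']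
    ring
  rw [h, Complex.im_ofReal_mul]

lemma Complex.eq_neg_one_and_eq_half_of_one_sub_add_mul_eq_zero {e : ℂ} (he : ‖e‖ = 1) {t : ℝ}
    (h : (1 - (t : ℂ)) + t * e = 0) : e = -1 ∧ t = 1 / 2 := by
  have hte : (t : ℂ) * e = ((t - 1 : ℝ) : ℂ) := by push_cast; linear_combination h
  have habs : |t| = |t - 1| := by
    simpa only [norm_mul, he, mul_one, Complex.norm_real, Real.norm_eq_abs] using congrArg norm hte
  have ht : t = 1 / 2 := by
    rcases abs_eq_abs.mp habs with h' | h' <;> linarith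
  subst ht
  refine ⟨?_, rfl⟩
  push_cast at h
  linear_combination 2 * h

/-- Orientation preservation (Lemmas 3.3, 3.5): the signed area determinant of
any triangle scales by `|c_t|²` under the time-`t` map of the linear morph to a
rotation; consequently, outside the degenerate case every positively oriented
triangle stays positively oriented. -/
theorem linear_morph_rotation_orientation
    (X : ℂ) (α t : ℝ) (f : ℂ → ℂ)
    (hf : ∀ p : ℂ, f p =
      (1 - (t : ℂ)) * p + (t : ℂ) * (X + Complex.exp ((α : ℂ) * Complex.I) * (p - X))) :
    (∀ a b c : ℂ,
      ((starRingEnd ℂ) (f b - f a) * (f c - f a)).im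
        = ‖(1 - (t : ℂ)) + (t : ℂ) * Complex.exp ((α : ℂ) * Complex.I)‖ ^ 2
            * ((starRingEnd ℂ) (b - a) * (c - a)).im) ∧
    (¬(Complex.exp ((α : ℂ) * Complex.I) = -1 ∧ t = 1 / 2) →
      ∀ a b c : ℂ, 0 < ((starRingEnd ℂ) (b - a) * (c - a)).im →
        0 < ((starRingEnd ℂ) (f b - f a) * (f c - f a)).im) := by
  set ct : ℂ := (1 - (t : ℂ)) + (t : ℂ) * Complex.exp ((α : ℂ) * Complex.I)
  have hdiff (p q : ℂ) : f p - f q = ct * (p - q) := by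
    rw [hf p, hf q]
    ring
  have harea (a b c : ℂ) : (conj (f b - f a) * (f c - f a)).im
      = ‖ct‖ ^ 2 * (conj (b - a) * (c - a)).im := by
    rw [hdiff b a, hdiff c a, Complex.im_conj_mul_mul_conj_mul]
  refine ⟨harea, fun hdeg a b c hpos => ?_⟩
  have hct : ct ≠ 0 := fun h0 => hdeg <|
    Complex.eq_neg_one_and_eq_half_of_one_sub_add_mul_eq_zero (Complex.norm_exp_ofReal_mul_I α) h0
  rw [harea]
  positivity
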